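/- For every p ∈ [2, ∞), the constants α = 1/(1+p) and β = log(π_p/2) / log(cosh_p(π_p/2)) are best possible in the inequality cosh_p(x)^(-β) < sin_p(x)/x < cosh_p(x)^(-α): if a real number a satisfies sin_p(x)/x < cosh_p(x)^(-a) for all x ∈ (0, π_p/2), then a ≤ 1/(1+p); and if a real number b satisfies cosh_p(x)^(-b) < sin_p(x)/x for all x ∈ (0, π_p/2), then b ≥ β. Equivalently, the function g(x) = log(x / sin_p(x)) / log(cosh_p(x)) satisfies lim_{x→0+} g(x) = 1/(1+p) and lim_{x→(π_p/2)-} g(x) = β. -/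

import Mathlib

open Real Set Filter Topology

/-- Generalized inverse sine: `arcsinp p x = ∫₀ˣ (1 - tᵖ)^(-1/p) dt`. -/
noncomputable def arcsinp (p x : ℝ) : ℝ := ∫ t in (0:ℝ)..x, (1 - t ^ p) ^ (-(1/p))

/-- The generalized half-pi: `π_p/2 = arcsin_p 1`. -/
noncomputable def pipHalf (p : ℝ) : ℝ := arcsinp p 1

/-- Generalized sine: the inverse of `arcsinp p` viewed as a map on `[0,1]`. -/
noncomputable def sinp (p : ℝ) : ℝ → ℝ := Function.invFunOn (arcsinp p) (Set.Icc 0 1)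

/-- Generalized cosine. -/
noncomputable def cosp (p x : ℝ) : ℝ := (1 - (sinp p x) ^ p) ^ (1/p : ℝ)

/-- Generalized tangent. -/
noncomputable def tanp (p x : ℝ) : ℝ := sinp p x / cosp p x

/-- Generalized inverse hyperbolic sine: `arsinhp p x = ∫₀ˣ (1 + tᵖ)^(-1/p) dt`. -/
noncomputable def arsinhp (p x : ℝ) : ℝ := ∫ t in (0:ℝ)..x, (1 + t ^ p) ^ (-(1/p))

/-- Generalized hyperbolic sine: the inverse of `arsinhp p` viewed as a map on `[0,∞)`. -/
noncomputable def sinhp (p : ℝ) : ℝ → ℝ := Function.invFunOn (arsinhp p) (Set.Ici 0)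

/-- Generalized hyperbolic cosine. -/
noncomputable def coshp (p x : ℝ) : ℝ := (1 + (sinhp p x) ^ p) ^ (1/p : ℝ)

/-- Generalized hyperbolic tangent. -/
noncomputable def tanhp (p x : ℝ) : ℝ := sinhp p x / coshp p x

/-!
Near `0` one has `x - sin_p x ∼ x^(p+1) / (p(p+1))`: with `s = sin_p x` this is `arcsin_p s - s`,
whose ratio to `s^(p+1)` follows from L'Hôpital's rule and `(1 - s^p)^(-1/p) - 1 ∼ s^p / p`.
Together with `log cosh_p x = (1/p) log (1 + sinh_p x ^ p) ∼ x^p / p` this gives `g x → 1/(1+p)`,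
while at `π_p/2` the limit of `g` is obtained by continuity, as `sin_p x → 1`. Since
`sin_p x / x < cosh_p x ^ (-a)` is equivalent to `a < g x`, an admissible `a` is at most the limit
of `g` at `0`, and dually an admissible `b` is at least its limit at `π_p/2`.
-/

open MeasureTheory intervalIntegral

lemma StrictMonoOn.monotoneOn_invFunOn {α β : Type*} [LinearOrder α] [Nonempty α]
    [Preorder β] {f : α → β} {s : Set α} {t : Set β} (hf : StrictMonoOn f s)
    (hst : SurjOn f s t) : MonotoneOn (Function.invFunOn f s) t := fun x hx y hy hxy => by
  rw [← hst.rightInvOn_invFunOn hx, ← hst.rightInvOn_invFunOn hy] at hxy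
  exact (hf.le_iff_le (hst.mapsTo_invFunOn hx) (hst.mapsTo_invFunOn hy)).1 hxy

lemma log_eq_sub_one_mul_dslope (y : ℝ) : log y = (y - 1) * dslope log 1 y := by
  simpa using (sub_smul_dslope log 1 y).symm

lemma tendsto_dslope_log_one : Tendsto (dslope log 1) (𝓝 1) (𝓝 1) := by
  have h := continuousAt_dslope_same.2 (differentiableAt_log one_ne_zero)
  simpa [dslope_same] using h.tendsto

lemma tendsto_slope_one_sub_rpow_neg_inv (p : ℝ) :
    Tendsto (slope (fun u : ℝ => (1 - u) ^ (-(1 / p))) 0) (𝓝[≠] 0) (𝓝 (1 / p)) := by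
  have hd : HasDerivAt (fun u : ℝ => (1 - u) ^ (-(1 / p))) (1 / p) 0 := by
    have hlin : HasDerivAt (fun u : ℝ => 1 - u) (-1) 0 := by
      simpa using (hasDerivAt_id (0 : ℝ)).const_sub 1
    convert hlin.rpow_const (p := -(1 / p)) (Or.inl (by norm_num)) using 1
    simp
  exact hasDerivAt_iff_tendsto_slope.1 hd

section arcsinp

variable {p : ℝ}

lemma one_le_arcsinp_integrand (hp : 0 < p) {t : ℝ} (ht : t ∈ Ico 0 1) :
    1 ≤ (1 - t ^ p) ^ (-(1 / p)) := by
  have htp : t ^ p < 1 := rpow_lt_one ht.1 ht.2 hp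
  refine one_le_rpow_of_pos_of_le_one_of_nonpos ?_ ?_ ?_
  · linarith
  · linarith [rpow_nonneg ht.1 p]
  · exact neg_nonpos.2 (by positivity)

lemma measurable_arcsinp_integrand (p : ℝ) :
    Measurable fun t : ℝ => (1 - t ^ p) ^ (-(1 / p)) :=
  (measurable_const.sub (measurable_id.pow_const p)).pow_const _

lemma intervalIntegrable_arcsinp_integrand (hp : 1 < p) :
    IntervalIntegrable (fun t => (1 - t ^ p) ^ (-(1 / p))) volume 0 1 := by
  have hp0 : 0 < p := by linarith
  have hexp : -1 < -(1 / p) := by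
    have : 1 / p < 1 := (div_lt_one hp0).2 hp
    linarith
  have hdom : IntervalIntegrable (fun t => (1 - t) ^ (-(1 / p))) volume 0 1 := by
    simpa using ((intervalIntegrable_rpow' (a := 0) (b := 1) hexp).comp_sub_left 1).symm
  refine hdom.mono_fun (measurable_arcsinp_integrand p).aestronglyMeasurable ?_
  rw [uIoc_of_le zero_le_one]
  filter_upwards [ae_restrict_mem measurableSet_Ioc] with t ht
  have hbase : 0 ≤ 1 - t ^ p := by linarith [rpow_le_one (ht.1.le) ht.2 hp0.le]
  rw [Real.norm_of_nonneg (rpow_nonneg hbase _),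
    Real.norm_of_nonneg (rpow_nonneg (by linarith [ht.2]) _)]
  rcases ht.2.eq_or_lt with rfl | ht1
  · simp
  · refine rpow_le_rpow_of_nonpos (by linarith) ?_ (by simp [hp0.le])
    linarith [rpow_le_self_of_le_one ht.1.le ht1.le hp.le]

lemma intervalIntegrable_arcsinp_integrand_of_mem (hp : 1 < p) {a b : ℝ}
    (ha : a ∈ Icc (0 : ℝ) 1) (hb : b ∈ Icc (0 : ℝ) 1) :
    IntervalIntegrable (fun t => (1 - t ^ p) ^ (-(1 / p))) volume a b := by
  rw [← uIcc_of_le (zero_le_one' ℝ)] at ha hb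
  exact (intervalIntegrable_arcsinp_integrand hp).mono_set (uIcc_subset_uIcc ha hb)

lemma arcsinp_zero (p : ℝ) : arcsinp p 0 = 0 := integral_same

lemma sub_le_arcsinp_sub_arcsinp (hp : 1 < p) {a b : ℝ} (ha : 0 ≤ a) (hab : a ≤ b)
    (hb : b ≤ 1) : b - a ≤ arcsinp p b - arcsinp p a := by
  have hint := @intervalIntegrable_arcsinp_integrand_of_mem p hp
  rw [arcsinp, arcsinp, integral_interval_sub_left (hint ⟨le_rfl, zero_le_one⟩ ⟨ha.trans hab, hb⟩)
    (hint ⟨le_rfl, zero_le_one⟩ ⟨ha, hab.trans hb⟩)]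
  simpa using integral_mono_on_of_le_Ioo hab intervalIntegrable_const
    (hint ⟨ha, hab.trans hb⟩ ⟨ha.trans hab, hb⟩)
    fun t ht => one_le_arcsinp_integrand (by linarith) ⟨ha.trans ht.1.le, ht.2.trans_le hb⟩

lemma strictMonoOn_arcsinp (hp : 1 < p) : StrictMonoOn (arcsinp p) (Icc 0 1) :=
  fun a ha b hb hab => by linarith [sub_le_arcsinp_sub_arcsinp hp ha.1 hab.le hb.2]

lemma self_le_arcsinp (hp : 1 < p) {s : ℝ} (hs : s ∈ Icc (0 : ℝ) 1) : s ≤ arcsinp p s := by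
  simpa [arcsinp_zero] using sub_le_arcsinp_sub_arcsinp hp le_rfl hs.1 hs.2

lemma one_le_pipHalf (hp : 1 < p) : 1 ≤ pipHalf p :=
  self_le_arcsinp hp ⟨zero_le_one, le_rfl⟩

lemma pipHalf_pos (hp : 1 < p) : 0 < pipHalf p :=
  zero_lt_one.trans_le (one_le_pipHalf hp)

lemma continuousOn_arcsinp (hp : 1 < p) : ContinuousOn (arcsinp p) (Icc 0 1) := by
  have h := continuousOn_primitive_interval (a := 0) (b := 1) (μ := volume)
    (f := fun t => (1 - t ^ p) ^ (-(1 / p))) <| by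
    rw [uIcc_of_le zero_le_one]
    exact (intervalIntegrable_iff_integrableOn_Icc_of_le zero_le_one).1
      (intervalIntegrable_arcsinp_integrand hp)
  rwa [uIcc_of_le zero_le_one] at h

lemma mapsTo_arcsinp (hp : 1 < p) : MapsTo (arcsinp p) (Icc 0 1) (Icc 0 (pipHalf p)) :=
  fun s hs => by
    have hmono := (strictMonoOn_arcsinp hp).monotoneOn
    have h0 := hmono ⟨le_rfl, zero_le_one⟩ hs hs.1
    rw [arcsinp_zero] at h0
    exact ⟨h0, hmono hs ⟨zero_le_one, le_rfl⟩ hs.2⟩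

lemma surjOn_arcsinp (hp : 1 < p) : SurjOn (arcsinp p) (Icc 0 1) (Icc 0 (pipHalf p)) := by
  intro y hy
  rw [← arcsinp_zero p] at hy
  exact intermediate_value_Icc zero_le_one (continuousOn_arcsinp hp) hy

lemma hasDerivAt_arcsinp (hp : 1 < p) {x : ℝ} (hx : x ∈ Ioo (0 : ℝ) 1) :
    HasDerivAt (arcsinp p) ((1 - x ^ p) ^ (-(1 / p))) x := by
  have hp0 : 0 < p := by linarith
  have hbase : 1 - x ^ p ≠ 0 := (sub_pos.2 (rpow_lt_one hx.1.le hx.2 hp0)).ne'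
  refine integral_hasDerivAt_right
    (intervalIntegrable_arcsinp_integrand_of_mem hp ⟨le_rfl, zero_le_one⟩ ⟨hx.1.le, hx.2.le⟩)
    (measurable_arcsinp_integrand p).stronglyMeasurable.stronglyMeasurableAtFilter ?_
  exact (continuousAt_const.sub (continuousAt_rpow_const x p (Or.inr hp0.le))).rpow_const
    (Or.inl hbase)

end arcsinp

section sinp

variable {p : ℝ}

lemma mapsTo_sinp (hp : 1 < p) : MapsTo (sinp p) (Icc 0 (pipHalf p)) (Icc 0 1) :=
  (surjOn_arcsinp hp).mapsTo_invFunOn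

lemma arcsinp_sinp (hp : 1 < p) {x : ℝ} (hx : x ∈ Icc 0 (pipHalf p)) :
    arcsinp p (sinp p x) = x :=
  (surjOn_arcsinp hp).rightInvOn_invFunOn hx

lemma sinp_arcsinp (hp : 1 < p) {s : ℝ} (hs : s ∈ Icc (0 : ℝ) 1) : sinp p (arcsinp p s) = s :=
  (strictMonoOn_arcsinp hp).injOn.leftInvOn_invFunOn hs

lemma monotoneOn_sinp (hp : 1 < p) : MonotoneOn (sinp p) (Icc 0 (pipHalf p)) :=
  (strictMonoOn_arcsinp hp).monotoneOn_invFunOn (surjOn_arcsinp hp)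

lemma surjOn_sinp (hp : 1 < p) : SurjOn (sinp p) (Icc 0 (pipHalf p)) (Icc 0 1) :=
  LeftInvOn.surjOn (fun _ hs => sinp_arcsinp hp hs) (mapsTo_arcsinp hp)

lemma sinp_zero (hp : 1 < p) : sinp p 0 = 0 := by
  simpa [arcsinp_zero] using sinp_arcsinp hp ⟨le_rfl, zero_le_one⟩

lemma sinp_pipHalf (hp : 1 < p) : sinp p (pipHalf p) = 1 :=
  sinp_arcsinp hp ⟨zero_le_one, le_rfl⟩

lemma sinp_pos (hp : 1 < p) {x : ℝ} (hx : x ∈ Ioc 0 (pipHalf p)) : 0 < sinp p x := by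
  refine (mapsTo_sinp hp (Ioc_subset_Icc_self hx)).1.lt_of_ne fun h => hx.1.ne ?_
  rw [← arcsinp_sinp hp (Ioc_subset_Icc_self hx), ← h, arcsinp_zero]

lemma tendsto_sinp_nhdsGT_zero (hp : 1 < p) : Tendsto (sinp p) (𝓝[>] 0) (𝓝[>] 0) := by
  have hcont : ContinuousWithinAt (sinp p) (Ici 0) 0 :=
    continuousWithinAt_right_of_monotoneOn_of_image_mem_nhdsWithin (monotoneOn_sinp hp)
      (Icc_mem_nhdsGE (pipHalf_pos hp))
      (mem_of_superset (by simpa [sinp_zero hp] using Icc_mem_nhdsGE zero_lt_one) (surjOn_sinp hp))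
  refine tendsto_nhdsWithin_iff.2 ⟨?_, ?_⟩
  · simpa [sinp_zero hp] using (hcont.mono Ioi_subset_Ici_self).tendsto
  · filter_upwards [Ioo_mem_nhdsGT (pipHalf_pos hp)] with x hx
    exact sinp_pos hp ⟨hx.1, hx.2.le⟩

lemma tendsto_sinp_nhdsLT_pipHalf (hp : 1 < p) : Tendsto (sinp p) (𝓝[<] pipHalf p) (𝓝 1) := by
  have hcont : ContinuousWithinAt (sinp p) (Iic (pipHalf p)) (pipHalf p) :=
    continuousWithinAt_left_of_monotoneOn_of_image_mem_nhdsWithin (monotoneOn_sinp hp)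
      (Icc_mem_nhdsLE (pipHalf_pos hp))
      (mem_of_superset (by simpa [sinp_pipHalf hp] using Icc_mem_nhdsLE zero_lt_one)
        (surjOn_sinp hp))
  simpa [sinp_pipHalf hp] using (hcont.mono Iio_subset_Iic_self).tendsto

end sinp

section asymptotics

variable {p : ℝ}

lemma tendsto_arcsinp_sub_self_div_rpow (hp : 1 < p) :
    Tendsto (fun s => (arcsinp p s - s) / s ^ (p + 1)) (𝓝[>] 0) (𝓝 (1 / (p * (p + 1)))) := by
  have hp0 : 0 < p := by linarith
  refine HasDerivAt.lhopital_zero_right_on_Ioo zero_lt_one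
    (f' := fun s => (1 - s ^ p) ^ (-(1 / p)) - 1) (g' := fun s => (p + 1) * s ^ p)
    (fun s hs => (hasDerivAt_arcsinp hp hs).sub (hasDerivAt_id s))
    (fun s hs => by simpa using hasDerivAt_rpow_const (p := p + 1) (Or.inl hs.1.ne'))
    (fun s hs => by have := rpow_pos_of_pos hs.1 p; positivity) ?_ ?_ ?_
  · have hcont := (continuousOn_arcsinp hp 0 ⟨le_rfl, zero_le_one⟩).mono_of_mem_nhdsWithin
      (mem_of_superset (Ioo_mem_nhdsGT zero_lt_one) Ioo_subset_Icc_self)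
    simpa [arcsinp_zero] using (hcont.tendsto.sub (tendsto_id.mono_left nhdsWithin_le_nhds))
  · exact (tendsto_id.mono_left nhdsWithin_le_nhds).rpow_const_nhds_zero (by linarith)
  · have hu : Tendsto (fun s : ℝ => s ^ p) (𝓝[>] 0) (𝓝[≠] 0) :=
      tendsto_nhdsWithin_iff.2 ⟨(tendsto_id.mono_left nhdsWithin_le_nhds).rpow_const_nhds_zero hp0,
        eventually_nhdsWithin_of_forall fun s hs => (rpow_pos_of_pos hs p).ne'⟩
    have h := ((tendsto_slope_one_sub_rpow_neg_inv p).comp hu).div_const (p + 1)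
    rw [div_div] at h
    refine h.congr fun s => ?_
    simp only [Function.comp_apply, slope_def_field, sub_zero, one_rpow]
    rw [div_div, mul_comm]

lemma tendsto_log_div_sinp_div_rpow (hp : 1 < p) :
    Tendsto (fun x => log (x / sinp p x) / x ^ p) (𝓝[>] 0) (𝓝 (1 / (p * (p + 1)))) := by
  have hp0 : 0 < p := by linarith
  have hev : ∀ᶠ x in 𝓝[>] (0 : ℝ), x ∈ Ioo 0 (pipHalf p) := Ioo_mem_nhdsGT (pipHalf_pos hp)
  have hsin := tendsto_sinp_nhdsGT_zero hp
  have hq : Tendsto (fun x => (x - sinp p x) / sinp p x ^ (p + 1)) (𝓝[>] 0)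
      (𝓝 (1 / (p * (p + 1)))) := by
    refine ((tendsto_arcsinp_sub_self_div_rpow hp).comp hsin).congr' ?_
    filter_upwards [hev] with x hx
    simp [arcsinp_sinp hp ⟨hx.1.le, hx.2.le⟩]
  have hsinp : Tendsto (fun x => sinp p x ^ p) (𝓝[>] 0) (𝓝 0) :=
    (hsin.mono_right nhdsWithin_le_nhds).rpow_const_nhds_zero hp0
  have hratio : Tendsto (fun x => x / sinp p x) (𝓝[>] 0) (𝓝 1) := by
    have hsum := (hq.mul hsinp).const_add 1
    rw [mul_zero, add_zero] at hsum
    refine hsum.congr' ?_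
    filter_upwards [hev] with x hx
    have hs := sinp_pos hp ⟨hx.1, hx.2.le⟩
    rw [rpow_add_one hs.ne']
    field_simp
    ring
  have hinv : Tendsto (fun x => (sinp p x / x) ^ p) (𝓝[>] 0) (𝓝 1) := by
    have h := hratio.inv₀ one_ne_zero
    rw [inv_one] at h
    simpa using h.rpow_const (p := p) (Or.inl one_ne_zero)
  have h := ((tendsto_dslope_log_one.comp hratio).mul hq).mul hinv
  rw [one_mul, mul_one] at h
  refine h.congr' ?_
  filter_upwards [hev] with x hx
  have hs := sinp_pos hp ⟨hx.1, hx.2.le⟩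
  rw [Function.comp_apply, log_eq_sub_one_mul_dslope (x / sinp p x), div_rpow hs.le hx.1.le,
    rpow_add_one hs.ne']
  have := rpow_pos_of_pos hs p
  have := rpow_pos_of_pos hx.1 p
  field_simp

end asymptotics

section arsinhp

variable {p : ℝ}

lemma continuousAt_arsinhp_integrand (hp : 0 < p) {x : ℝ} (hx : 0 ≤ x) :
    ContinuousAt (fun t => (1 + t ^ p) ^ (-(1 / p))) x :=
  (continuousAt_const.add (continuousAt_rpow_const x p (Or.inr hp.le))).rpow_const
    (Or.inl (add_pos_of_pos_of_nonneg one_pos (rpow_nonneg hx p)).ne')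

lemma intervalIntegrable_arsinhp_integrand (hp : 0 < p) {s : ℝ} (hs : 0 ≤ s) :
    IntervalIntegrable (fun t => (1 + t ^ p) ^ (-(1 / p))) volume 0 s := by
  refine ContinuousOn.intervalIntegrable fun t ht => ?_
  rw [uIcc_of_le hs] at ht
  exact (continuousAt_arsinhp_integrand hp ht.1).continuousWithinAt

lemma hasDerivAt_arsinhp (hp : 0 < p) {x : ℝ} (hx : 0 ≤ x) :
    HasDerivAt (arsinhp p) ((1 + x ^ p) ^ (-(1 / p))) x := by
  refine integral_hasDerivAt_right (intervalIntegrable_arsinhp_integrand hp hx) ?_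
    (continuousAt_arsinhp_integrand hp hx)
  exact ((measurable_const.add (measurable_id.pow_const p)).pow_const _).stronglyMeasurable
      |>.stronglyMeasurableAtFilter

lemma arsinhp_zero (p : ℝ) : arsinhp p 0 = 0 := integral_same

lemma continuousOn_arsinhp (hp : 0 < p) : ContinuousOn (arsinhp p) (Ici 0) :=
  fun _ hx => (hasDerivAt_arsinhp hp hx).continuousAt.continuousWithinAt

lemma strictMonoOn_arsinhp (hp : 0 < p) : StrictMonoOn (arsinhp p) (Ici 0) := by
  refine strictMonoOn_of_deriv_pos (convex_Ici 0) (continuousOn_arsinhp hp) fun x hx => ?_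
  rw [interior_Ici] at hx
  rw [(hasDerivAt_arsinhp hp (le_of_lt hx)).deriv]
  exact rpow_pos_of_pos (add_pos one_pos (rpow_pos_of_pos hx p)) _

lemma log_one_add_le_arsinhp (hp : 1 ≤ p) {s : ℝ} (hs : 0 ≤ s) : log (1 + s) ≤ arsinhp p s := by
  have hp0 : 0 < p := by linarith
  have hlog : ∫ t in (0 : ℝ)..s, (1 + t)⁻¹ = log (1 + s) := by
    rw [integral_comp_add_left (fun t => t⁻¹), integral_inv_of_pos (by norm_num) (by linarith)]
    simp
  rw [← hlog, arsinhp]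
  refine integral_mono_on hs ?_ ?_ fun t ht => ?_
  · refine ((continuousOn_const.add continuousOn_id).inv₀ fun t ht => ?_).intervalIntegrable
    rw [uIcc_of_le hs] at ht
    exact (add_pos_of_pos_of_nonneg one_pos ht.1).ne'
  · exact intervalIntegrable_arsinhp_integrand hp0 hs
  · have hbase : 0 < 1 + t ^ p := by linarith [rpow_nonneg ht.1 p]
    have hmink := rpow_add_rpow_le_add zero_le_one ht.1 hp
    rw [one_rpow] at hmink
    rw [rpow_neg hbase.le]
    exact inv_anti₀ (rpow_pos_of_pos hbase _) hmink

lemma mapsTo_arsinhp (hp : 0 < p) : MapsTo (arsinhp p) (Ici 0) (Ici 0) := fun s hs => by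
  simpa [arsinhp_zero] using (strictMonoOn_arsinhp hp).monotoneOn self_mem_Ici hs hs

lemma surjOn_arsinhp (hp : 1 ≤ p) : SurjOn (arsinhp p) (Ici 0) (Ici 0) := by
  intro y hy
  have hM : 0 ≤ exp y - 1 := by linarith [add_one_le_exp y, mem_Ici.1 hy]
  have hyM : y ≤ arsinhp p (exp y - 1) := by
    simpa using log_one_add_le_arsinhp hp hM
  obtain ⟨s, hs, hsy⟩ := intermediate_value_Icc hM
    ((continuousOn_arsinhp (by linarith)).mono Icc_subset_Ici_self)
    ⟨by simpa [arsinhp_zero] using hy, hyM⟩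
  exact ⟨s, hs.1, hsy⟩

end arsinhp

section sinhp

variable {p : ℝ}

lemma sinhp_nonneg (hp : 1 ≤ p) {x : ℝ} (hx : 0 ≤ x) : 0 ≤ sinhp p x :=
  (surjOn_arsinhp hp).mapsTo_invFunOn hx

lemma arsinhp_sinhp (hp : 1 ≤ p) {x : ℝ} (hx : 0 ≤ x) : arsinhp p (sinhp p x) = x :=
  (surjOn_arsinhp hp).rightInvOn_invFunOn hx

lemma sinhp_arsinhp (hp : 0 < p) {s : ℝ} (hs : 0 ≤ s) : sinhp p (arsinhp p s) = s :=
  (strictMonoOn_arsinhp hp).injOn.leftInvOn_invFunOn hs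

lemma monotoneOn_sinhp (hp : 1 ≤ p) : MonotoneOn (sinhp p) (Ici 0) :=
  (strictMonoOn_arsinhp (by linarith)).monotoneOn_invFunOn (surjOn_arsinhp hp)

lemma surjOn_sinhp (hp : 0 < p) : SurjOn (sinhp p) (Ici 0) (Ici 0) :=
  LeftInvOn.surjOn (fun _ hs => sinhp_arsinhp hp hs) (mapsTo_arsinhp hp)

lemma sinhp_zero (hp : 0 < p) : sinhp p 0 = 0 := by
  simpa [arsinhp_zero] using sinhp_arsinhp hp le_rfl

lemma sinhp_pos (hp : 1 ≤ p) {x : ℝ} (hx : 0 < x) : 0 < sinhp p x := by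
  refine (sinhp_nonneg hp hx.le).lt_of_ne fun h => hx.ne ?_
  rw [← arsinhp_sinhp hp hx.le, ← h, arsinhp_zero]

lemma continuousOn_sinhp (hp : 1 ≤ p) : ContinuousOn (sinhp p) (Ici 0) := by
  have hp0 : 0 < p := by linarith
  intro x hx
  rcases (mem_Ici.1 hx).eq_or_lt with rfl | hx0
  · refine continuousWithinAt_right_of_monotoneOn_of_image_mem_nhdsWithin (monotoneOn_sinhp hp)
      self_mem_nhdsWithin (mem_of_superset ?_ (surjOn_sinhp hp0))
    simpa [sinhp_zero hp0] using self_mem_nhdsWithin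
  · exact (continuousAt_of_monotoneOn_of_image_mem_nhds (monotoneOn_sinhp hp) (Ici_mem_nhds hx0)
      (mem_of_superset (Ici_mem_nhds (sinhp_pos hp hx0)) (surjOn_sinhp hp0))).continuousWithinAt

lemma tendsto_sinhp_nhdsGT_zero (hp : 1 ≤ p) : Tendsto (sinhp p) (𝓝[>] 0) (𝓝[>] 0) := by
  refine tendsto_nhdsWithin_iff.2 ⟨?_, eventually_nhdsWithin_of_forall fun x hx => sinhp_pos hp hx⟩
  simpa [sinhp_zero (by linarith : (0 : ℝ) < p)] using
    ((continuousOn_sinhp hp 0 self_mem_Ici).mono Ioi_subset_Ici_self).tendsto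

lemma tendsto_sinhp_div_self (hp : 1 ≤ p) :
    Tendsto (fun x => sinhp p x / x) (𝓝[>] 0) (𝓝 1) := by
  have hp0 : 0 < p := by linarith
  have hslope := hasDerivAt_iff_tendsto_slope.1 (hasDerivAt_arsinhp hp0 le_rfl)
  rw [zero_rpow hp0.ne', add_zero, one_rpow] at hslope
  have h := (hslope.comp ((tendsto_sinhp_nhdsGT_zero hp).mono_right
    (nhdsWithin_mono _ fun y hy => ne_of_gt hy))).inv₀ one_ne_zero
  rw [inv_one] at h
  refine h.congr' ?_
  filter_upwards [self_mem_nhdsWithin] with x hx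
  simp [slope_def_field, arsinhp_sinhp hp (le_of_lt hx), arsinhp_zero]

end sinhp

section coshp

variable {p : ℝ}

lemma one_lt_coshp (hp : 1 ≤ p) {x : ℝ} (hx : 0 < x) : 1 < coshp p x :=
  one_lt_rpow (by linarith [rpow_pos_of_pos (sinhp_pos hp hx) p]) (by positivity)

lemma continuousAt_coshp (hp : 1 ≤ p) {x : ℝ} (hx : 0 < x) : ContinuousAt (coshp p) x := by
  have hsinh := (continuousOn_sinhp hp).continuousAt (Ici_mem_nhds hx)
  exact (continuousAt_const.add (hsinh.rpow_const (Or.inr (by linarith)))).rpow_const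
    (Or.inr (by positivity))

lemma tendsto_log_coshp_div_rpow (hp : 1 ≤ p) :
    Tendsto (fun x => log (coshp p x) / x ^ p) (𝓝[>] 0) (𝓝 (1 / p)) := by
  have hp0 : 0 < p := by linarith
  have hsinh := tendsto_sinhp_nhdsGT_zero hp
  have hsum : Tendsto (fun x => 1 + sinhp p x ^ p) (𝓝[>] 0) (𝓝 1) := by
    simpa using ((hsinh.mono_right nhdsWithin_le_nhds).rpow_const_nhds_zero hp0).const_add 1
  have hratio : Tendsto (fun x => (sinhp p x / x) ^ p) (𝓝[>] 0) (𝓝 1) := by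
    simpa using (tendsto_sinhp_div_self hp).rpow_const (p := p) (Or.inl one_ne_zero)
  have h := ((tendsto_dslope_log_one.comp hsum).mul hratio).const_mul (1 / p)
  rw [one_mul, mul_one] at h
  refine h.congr' ?_
  filter_upwards [self_mem_nhdsWithin] with x hx
  have hs := sinhp_pos hp hx
  rw [Function.comp_apply, coshp, log_rpow (by positivity),
    log_eq_sub_one_mul_dslope (1 + sinhp p x ^ p), div_rpow hs.le (le_of_lt hx)]
  have := rpow_pos_of_pos (mem_Ioi.1 hx) p
  field_simp
  ring

end coshp

/-- The function `g` of the statement. -/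
noncomputable def sinpCoshpExponent (p x : ℝ) : ℝ := log (x / sinp p x) / log (coshp p x)

lemma tendsto_sinpCoshpExponent_nhdsGT_zero {p : ℝ} (hp : 1 < p) :
    Tendsto (sinpCoshpExponent p) (𝓝[>] 0) (𝓝 (1 / (1 + p))) := by
  have hp0 : 0 < p := by linarith
  have h := (tendsto_log_div_sinp_div_rpow hp).div (tendsto_log_coshp_div_rpow hp.le)
    (one_div_ne_zero hp0.ne')
  rw [show 1 / (p * (p + 1)) / (1 / p) = 1 / (1 + p) by field_simp; ring] at h
  refine h.congr' ?_
  filter_upwards [self_mem_nhdsWithin] with x hx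
  rw [Pi.div_apply, sinpCoshpExponent,
    div_div_div_cancel_right₀ (rpow_pos_of_pos (mem_Ioi.1 hx) p).ne']

lemma tendsto_sinpCoshpExponent_nhdsLT_pipHalf {p : ℝ} (hp : 1 < p) :
    Tendsto (sinpCoshpExponent p) (𝓝[<] pipHalf p)
      (𝓝 (log (pipHalf p) / log (coshp p (pipHalf p)))) := by
  have hπ := pipHalf_pos hp
  have hnum : Tendsto (fun x => log (x / sinp p x)) (𝓝[<] pipHalf p) (𝓝 (log (pipHalf p))) := by
    have h := (tendsto_id.mono_left nhdsWithin_le_nhds).div (tendsto_sinp_nhdsLT_pipHalf hp)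
      one_ne_zero
    rw [div_one] at h
    exact h.log hπ.ne'
  have hcosh := one_lt_coshp hp.le hπ
  have hden : Tendsto (fun x => log (coshp p x)) (𝓝[<] pipHalf p)
      (𝓝 (log (coshp p (pipHalf p)))) := ((continuousAt_coshp hp.le hπ).tendsto.log
    (zero_lt_one.trans hcosh).ne').mono_left nhdsWithin_le_nhds
  exact hnum.div hden (log_pos hcosh).ne'

lemma div_lt_rpow_neg_iff {s x c a : ℝ} (hs : 0 < s) (hx : 0 < x) (hc : 1 < c) :
    s / x < c ^ (-a) ↔ a < log (x / s) / log c := by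
  rw [lt_div_iff₀ (log_pos hc), ← log_lt_log_iff (div_pos hs hx) (rpow_pos_of_pos (by linarith) _),
    log_rpow (by linarith), ← inv_div, log_inv]
  constructor <;> intro h <;> linarith

lemma rpow_neg_lt_div_iff {s x c b : ℝ} (hs : 0 < s) (hx : 0 < x) (hc : 1 < c) :
    c ^ (-b) < s / x ↔ log (x / s) / log c < b := by
  rw [div_lt_iff₀ (log_pos hc), ← log_lt_log_iff (rpow_pos_of_pos (by linarith) _) (div_pos hs hx),
    log_rpow (by linarith), ← inv_div, log_inv]
  constructor <;> intro h <;> linarith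

theorem stmt_5 (p : ℝ) (hp : 2 ≤ p)
    (β : ℝ) (hβ : β = Real.log (pipHalf p) / Real.log (coshp p (pipHalf p))) :
    (∀ a : ℝ, (∀ x ∈ Set.Ioo 0 (pipHalf p), sinp p x / x < coshp p x ^ (-a)) →
      a ≤ 1 / (1 + p)) ∧
    (∀ b : ℝ, (∀ x ∈ Set.Ioo 0 (pipHalf p), coshp p x ^ (-b) < sinp p x / x) →
      b ≥ β) ∧
    Tendsto (fun x => Real.log (x / sinp p x) / Real.log (coshp p x))
      (𝓝[>] (0:ℝ)) (𝓝 (1 / (1 + p))) ∧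
    Tendsto (fun x => Real.log (x / sinp p x) / Real.log (coshp p x))
      (𝓝[<] (pipHalf p)) (𝓝 β) := by
  have hp1 : 1 < p := by linarith
  have hπ := pipHalf_pos hp1
  have hzero := tendsto_sinpCoshpExponent_nhdsGT_zero hp1
  have hpip := tendsto_sinpCoshpExponent_nhdsLT_pipHalf hp1
  rw [← hβ] at hpip
  have hsinp {x} (hx : x ∈ Ioo 0 (pipHalf p)) := sinp_pos hp1 (Ioo_subset_Ioc_self hx)
  have hcoshp {x} (hx : x ∈ Ioo 0 (pipHalf p)) := one_lt_coshp hp1.le hx.1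
  refine ⟨fun a ha => ge_of_tendsto hzero ?_, fun b hb => le_of_tendsto hpip ?_, hzero, hpip⟩
  · filter_upwards [Ioo_mem_nhdsGT hπ] with x hx
    exact ((div_lt_rpow_neg_iff (hsinp hx) hx.1 (hcoshp hx)).1 (ha x hx)).le
  · filter_upwards [Ioo_mem_nhdsLT hπ] with x hx
    exact ((rpow_neg_lt_div_iff (hsinp hx) hx.1 (hcoshp hx)).1 (hb x hx)).le
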